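/- Let u ∈ ℝⁿ with all entries u_i ∈ [0, 1/k] and ∑_i u_i = 1, where u has at least one entry strictly in (0, 1/k). Then there is no real symmetric matrix H with H_{ii} + H_{jj} ≥ 2H_{ij} for all i < j such that uᵀHu > xᵀHx for every x ∈ ℝⁿ having exactly k nonzero entries each equal to 1/k. -/

import Mathlib

/-!
Moving mass `t` from coordinate `j` to coordinate `i` keeps `∑ wₗ`, and along the direction
`eᵢ - eⱼ` the form `w ↦ wᵀ H w` is a parabola in `t` with leading coefficient
`Hᵢᵢ + Hⱼⱼ - 2 Hᵢⱼ ≥ 0`. So if two coordinates of `w ∈ [0, c]ⁿ` lie strictly inside `(0, c)`,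
one of the two longest such moves inside the box does not decrease the form and pushes one more
coordinate to `0` or `c`. When `∑ wₗ` is an integer multiple `m c`, a point never has exactly
one coordinate inside `(0, c)`, so induction on their number ends at a vertex `c · 1_T` with
`#T = m`, where the form is at least its value at the starting point.
-/

/-- The set of vectors in ℝⁿ with exactly k nonzero entries, each equal to 1/k. -/
def Vnk (n k : ℕ) : Set (Fin n → ℝ) :=
  {x | ∃ T : Finset (Fin n), T.card = k ∧ ∀ i, x i = if i ∈ T then (1 : ℝ) / k else 0}

open Finset Matrix

section QuadraticForm

variable {ι R : Type*} [Fintype ι]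

lemma add_smul_dotProduct_mulVec_add_smul [CommRing R] (H : Matrix ι ι R) (u d : ι → R)
    (t : R) :
    (u + t • d) ⬝ᵥ H *ᵥ (u + t • d)
      = u ⬝ᵥ H *ᵥ u + t * (u ⬝ᵥ H *ᵥ d + d ⬝ᵥ H *ᵥ u) + t ^ 2 * (d ⬝ᵥ H *ᵥ d) := by
  simp only [mulVec_add, mulVec_smul, dotProduct_add, add_dotProduct, dotProduct_smul,
    smul_dotProduct, smul_eq_mul]
  ring

lemma single_sub_single_dotProduct_mulVec [DecidableEq ι] [CommRing R] (H : Matrix ι ι R)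
    (i j : ι) :
    (Pi.single i 1 - Pi.single j 1) ⬝ᵥ H *ᵥ (Pi.single i 1 - Pi.single j 1)
      = H i i - H i j - H j i + H j j := by
  simp only [mulVec_sub, mulVec_single_one, sub_dotProduct, single_one_dotProduct, Pi.sub_apply,
    col_apply]
  ring

end QuadraticForm

lemma nonneg_or_nonneg_of_convex_quadratic {B C s t : ℝ} (hC : 0 ≤ C) (hs : 0 < s)
    (ht : 0 < t) :
    0 ≤ t * B + t ^ 2 * C ∨ 0 ≤ -s * B + (-s) ^ 2 * C := by
  by_contra! h
  -- `s f(t) + t f(-s) = s t (s + t) C ≥ 0` for `f(x) = x B + x² C`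
  nlinarith [mul_neg_of_pos_of_neg hs h.1, mul_neg_of_pos_of_neg ht h.2,
    mul_nonneg (mul_nonneg hs.le ht.le) (mul_nonneg (add_pos hs ht).le hC)]

section Fractional

variable {ι : Type*} [Fintype ι]

noncomputable def fractional (c : ℝ) (u : ι → ℝ) : Finset ι := {l | u l ∈ Set.Ioo 0 c}

lemma mem_fractional {c : ℝ} {u : ι → ℝ} {l : ι} : l ∈ fractional c u ↔ u l ∈ Set.Ioo 0 c := by
  simp [fractional]

lemma apply_eq_ite_of_notMem_fractional {c : ℝ} {u : ι → ℝ} (hu : ∀ l, u l ∈ Set.Icc 0 c)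
    {l : ι} (hl : l ∉ fractional c u) :
    u l = if u l = c then c else 0 := by
  rw [mem_fractional] at hl
  split_ifs with hc
  · exact hc
  · by_contra h0
    exact hl ⟨(hu l).1.lt_of_ne' h0, (hu l).2.lt_of_ne hc⟩

lemma sum_eq_card_mul_add_sum_fractional {c : ℝ} {u : ι → ℝ} (hu : ∀ l, u l ∈ Set.Icc 0 c) :
    ∑ l, u l = #{l | u l = c} * c + ∑ l ∈ fractional c u, u l := by
  rw [← nsmul_eq_mul, ← sum_const, sum_filter, fractional, sum_filter, ← sum_add_distrib]
  refine sum_congr rfl fun l _ => ?_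
  by_cases hc : u l = c
  · simp [hc]
  by_cases h0 : u l = 0
  · simp [h0]
  · have : u l ∈ Set.Ioo 0 c := ⟨(hu l).1.lt_of_ne' h0, (hu l).2.lt_of_ne hc⟩
    simp [hc, this]

lemma card_fractional_ne_one {c : ℝ} {u : ι → ℝ} {m : ℕ} (hu : ∀ l, u l ∈ Set.Icc 0 c)
    (hsum : ∑ l, u l = m * c) : #(fractional c u) ≠ 1 := by
  intro h
  obtain ⟨i, hi⟩ := card_eq_one.1 h
  have hui : u i ∈ Set.Ioo 0 c := mem_fractional.1 (hi ▸ mem_singleton_self i)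
  have hc : 0 ≤ c := hui.1.le.trans hui.2.le
  rw [sum_eq_card_mul_add_sum_fractional hu, hi, sum_singleton] at hsum
  -- `(m - N) c = u i ∈ (0, c)` would put the integer `m - N` strictly between `0` and `1`
  set N := #{l | u l = c}
  have hNm : (N : ℝ) < m := lt_of_mul_lt_mul_right (by linarith [hui.1]) hc
  have hmN : (m : ℝ) < N + 1 := lt_of_mul_lt_mul_right (by linarith [hui.2]) hc
  norm_cast at hNm hmN
  omega

end Fractional

section Transfer

variable {ι : Type*} [DecidableEq ι]

def transfer (u : ι → ℝ) (i j : ι) (t : ℝ) : ι → ℝ :=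
  u + t • (Pi.single i 1 - Pi.single j 1)

lemma transfer_apply_left (u : ι → ℝ) {i j : ι} (hij : i ≠ j) (t : ℝ) :
    transfer u i j t i = u i + t := by
  simp [transfer, hij]

lemma transfer_apply_right (u : ι → ℝ) {i j : ι} (hij : i ≠ j) (t : ℝ) :
    transfer u i j t j = u j - t := by
  simp [transfer, hij.symm, sub_eq_add_neg]

lemma transfer_apply_of_ne (u : ι → ℝ) {i j l : ι} (hi : l ≠ i) (hj : l ≠ j) (t : ℝ) :
    transfer u i j t l = u l := by
  simp [transfer, hi, hj]

lemma transfer_neg (u : ι → ℝ) (i j : ι) (t : ℝ) : transfer u i j (-t) = transfer u j i t := by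
  ext l
  simp only [transfer, Pi.add_apply, Pi.smul_apply, Pi.sub_apply, smul_eq_mul]
  ring

lemma sum_transfer [Fintype ι] (u : ι → ℝ) (i j : ι) (t : ℝ) :
    ∑ l, transfer u i j t l = ∑ l, u l := by
  simp [transfer, sum_add_distrib, ← mul_sum]

lemma transfer_dotProduct_mulVec_transfer [Fintype ι] (H : Matrix ι ι ℝ) (u : ι → ℝ)
    (i j : ι) (t : ℝ) :
    transfer u i j t ⬝ᵥ H *ᵥ transfer u i j t
      = u ⬝ᵥ H *ᵥ u + t * (u ⬝ᵥ H *ᵥ (Pi.single i 1 - Pi.single j 1)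
          + (Pi.single i 1 - Pi.single j 1) ⬝ᵥ H *ᵥ u)
        + t ^ 2 * (H i i - H i j - H j i + H j j) := by
  rw [transfer, add_smul_dotProduct_mulVec_add_smul, single_sub_single_dotProduct_mulVec]

lemma le_transfer_or_le_transfer [Fintype ι] (H : Matrix ι ι ℝ) (u : ι → ℝ) (i j : ι)
    (hH : H i j + H j i ≤ H i i + H j j) {s t : ℝ} (hs : 0 < s) (ht : 0 < t) :
    u ⬝ᵥ H *ᵥ u ≤ transfer u i j t ⬝ᵥ H *ᵥ transfer u i j t ∨
      u ⬝ᵥ H *ᵥ u ≤ transfer u j i s ⬝ᵥ H *ᵥ transfer u j i s := by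
  rw [← transfer_neg u i j s, transfer_dotProduct_mulVec_transfer,
    transfer_dotProduct_mulVec_transfer]
  have hC : 0 ≤ H i i - H i j - H j i + H j j := by linarith
  rcases nonneg_or_nonneg_of_convex_quadratic (B := u ⬝ᵥ H *ᵥ (Pi.single i 1 - Pi.single j 1)
    + (Pi.single i 1 - Pi.single j 1) ⬝ᵥ H *ᵥ u) hC hs ht with h | h
  · exact Or.inl (by linarith)
  · exact Or.inr (by linarith)

lemma transfer_mem_Icc {c : ℝ} {u : ι → ℝ} (hu : ∀ l, u l ∈ Set.Icc 0 c) {i j : ι}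
    (hij : i ≠ j) {t : ℝ} (ht : 0 ≤ t) (hti : t ≤ c - u i) (htj : t ≤ u j) (l : ι) :
    transfer u i j t l ∈ Set.Icc 0 c := by
  by_cases hli : l = i
  · subst hli
    rw [transfer_apply_left u hij]
    constructor <;> linarith [(hu l).1]
  by_cases hlj : l = j
  · subst hlj
    rw [transfer_apply_right u hij]
    constructor <;> linarith [(hu l).2]
  rw [transfer_apply_of_ne u hli hlj]
  exact hu l

lemma fractional_transfer_min_ssubset [Fintype ι] {c : ℝ} {u : ι → ℝ} {i j : ι} (hij : i ≠ j)
    (hi : i ∈ fractional c u) (hj : j ∈ fractional c u) :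
    fractional c (transfer u i j (min (c - u i) (u j))) ⊂ fractional c u := by
  rw [mem_fractional] at hi hj
  refine Finset.ssubset_iff_of_subset (fun l hl => ?_) |>.2 ?_
  · rw [mem_fractional] at hl ⊢
    by_cases hli : l = i
    · exact hli ▸ hi
    by_cases hlj : l = j
    · exact hlj ▸ hj
    rwa [transfer_apply_of_ne u hli hlj] at hl
  rcases le_total (c - u i) (u j) with h | h
  · refine ⟨i, mem_fractional.2 hi, fun hi' => ?_⟩
    rw [mem_fractional, transfer_apply_left u hij, min_eq_left h] at hi'
    linarith [hi'.2]
  · refine ⟨j, mem_fractional.2 hj, fun hj' => ?_⟩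
    rw [mem_fractional, transfer_apply_right u hij, min_eq_right h] at hj'
    linarith [hj'.1]

lemma exists_le_of_mem_fractional [Fintype ι] (H : Matrix ι ι ℝ) {c : ℝ} {u : ι → ℝ}
    (hu : ∀ l, u l ∈ Set.Icc 0 c) {i j : ι} (hij : i ≠ j) (hH : H i j + H j i ≤ H i i + H j j)
    (hi : i ∈ fractional c u) (hj : j ∈ fractional c u) :
    ∃ v : ι → ℝ, (∀ l, v l ∈ Set.Icc 0 c) ∧ ∑ l, v l = ∑ l, u l ∧
      fractional c v ⊂ fractional c u ∧ u ⬝ᵥ H *ᵥ u ≤ v ⬝ᵥ H *ᵥ v := by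
  have hi' := mem_fractional.1 hi
  have hj' := mem_fractional.1 hj
  rcases le_transfer_or_le_transfer H u i j hH (s := min (c - u j) (u i))
    (t := min (c - u i) (u j)) (lt_min (by linarith [hj'.2]) hi'.1)
    (lt_min (by linarith [hi'.2]) hj'.1) with h | h
  · exact ⟨_, transfer_mem_Icc hu hij (le_min (by linarith [hi'.2]) hj'.1.le)
      (min_le_left _ _) (min_le_right _ _), sum_transfer u i j _,
      fractional_transfer_min_ssubset hij hi hj, h⟩
  · exact ⟨_, transfer_mem_Icc hu hij.symm (le_min (by linarith [hj'.2]) hi'.1.le)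
      (min_le_left _ _) (min_le_right _ _), sum_transfer u j i _,
      fractional_transfer_min_ssubset hij.symm hj hi, h⟩

theorem exists_card_eq_le_dotProduct_mulVec [Fintype ι] (H : Matrix ι ι ℝ)
    (hH : ∀ i j, H i j + H j i ≤ H i i + H j j) {c : ℝ} (hc : c ≠ 0) {m : ℕ} {u : ι → ℝ}
    (hu : ∀ l, u l ∈ Set.Icc 0 c) (hsum : ∑ l, u l = m * c) :
    ∃ T : Finset ι, #T = m ∧ u ⬝ᵥ H *ᵥ u ≤
      (fun l => if l ∈ T then c else 0) ⬝ᵥ H *ᵥ (fun l => if l ∈ T then c else 0) := by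
  induction hN : #(fractional c u) using Nat.strong_induction_on generalizing u with
  | _ N ih =>
  rcases (fractional c u).eq_empty_or_nonempty with hF | hF
  · set T : Finset ι := {l | u l = c}
    have hu' : (fun l => if l ∈ T then c else 0) = u := by
      ext l
      rw [apply_eq_ite_of_notMem_fractional hu (hF ▸ notMem_empty l)]
      simp only [T, mem_filter_univ]
    refine ⟨T, ?_, hu' ▸ le_rfl⟩
    rw [sum_eq_card_mul_add_sum_fractional hu, hF, sum_empty, add_zero] at hsum
    exact_mod_cast mul_right_cancel₀ hc hsum
  · have h2 : 1 < #(fractional c u) := by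
      have := card_fractional_ne_one hu hsum
      have := hF.card_pos
      omega
    obtain ⟨i, hi, j, hj, hij⟩ := one_lt_card.1 h2
    obtain ⟨v, hv, hvsum, hvF, hle⟩ := exists_le_of_mem_fractional H hu hij (hH i j) hi hj
    obtain ⟨T, hT, hle'⟩ := ih _ (hN ▸ card_lt_card hvF) hv (hvsum.trans hsum) rfl
    exact ⟨T, hT, hle.trans hle'⟩

end Transfer

theorem stmt11_general (n k : ℕ) (hk : 1 ≤ k)
    (u : Fin n → ℝ) (hu1 : ∀ i, u i ∈ Set.Icc (0 : ℝ) (1 / k)) (hu2 : ∑ i, u i = 1) :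
    ¬ ∃ H : Matrix (Fin n) (Fin n) ℝ, H.IsSymm ∧
        (∀ i j : Fin n, i < j → 2 * H i j ≤ H i i + H j j) ∧
        ∀ x ∈ Vnk n k,
          dotProduct x (H.mulVec x) < dotProduct u (H.mulVec u) := by
  rintro ⟨H, hsymm, hconv, hlt⟩
  have hH : ∀ i j, H i j + H j i ≤ H i i + H j j := by
    intro i j
    have := hsymm.apply i j
    rcases lt_trichotomy i j with h | rfl | h
    · linarith [hconv i j h]
    · exact le_rfl
    · linarith [hconv j i h]
  have hk' : (0 : ℝ) < k := by exact_mod_cast hk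
  obtain ⟨T, hT, hle⟩ := exists_card_eq_le_dotProduct_mulVec H hH (one_div_ne_zero hk'.ne') hu1
    (by rw [hu2, mul_one_div_cancel hk'.ne'])
  exact (hlt _ ⟨T, hT, fun _ => rfl⟩).not_ge hle

/-- Lemma 4 of Johnston–Li–Plosker–Poon–Regula: no symmetric matrix H with the
convexity condition strictly separates u from all vertices in V(n,k). -/
theorem stmt11 (n k : ℕ) (hk : 1 ≤ k) (hkn : k ≤ n)
    (u : Fin n → ℝ) (hu1 : ∀ i, u i ∈ Set.Icc (0 : ℝ) (1 / k)) (hu2 : ∑ i, u i = 1)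
    (hfrac : ∃ i, u i ∈ Set.Ioo (0 : ℝ) (1 / k)) :
    ¬ ∃ H : Matrix (Fin n) (Fin n) ℝ, H.IsSymm ∧
        (∀ i j : Fin n, i < j → 2 * H i j ≤ H i i + H j j) ∧
        ∀ x ∈ Vnk n k,
          dotProduct x (H.mulVec x) < dotProduct u (H.mulVec u) :=
  stmt11_general n k hk u hu1 hu2
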